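/- For α, β ∈ (0,1), the function h(v) = (1+v^{1/β})^β − (1−v)/α − v on [0,∞) satisfies h'(v) = (1+v^{−1/β})^{β−1} + 1/α − 1 > 0 for all v > 0, h(0) = 1 − 1/α < 0, and h(1) = 2^β − 1 > 0; hence h has a unique root v* in (0,1). Moreover, for this root, (1+v*^{1/β})^{−β} > 2^{−β}. -/

import Mathlib

/-!
`h` is continuous with `h' > 0` on `(0, ∞)`, so it is strictly increasing on `[0, ∞)`; as
`h 0 < 0 < h 1`, the intermediate value theorem gives exactly one root in `(0, 1)`. The final
inequality only uses `v ^ (1/β) < 1` for `v < 1` and that `t ↦ t ^ (-β)` is decreasing.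
-/

open Real Set

/-- The function `h` of the paper; its root `v*` determines `η_{1,3} = (1 + v* ^ (1/β)) ^ (-β)`. -/
noncomputable def vineRootFn (α β v : ℝ) : ℝ := (1 + v ^ (1 / β)) ^ β - (1 - v) / α - v

lemma one_add_rpow_neg_inv_rpow_sub_one {β v : ℝ} (hβ : β ≠ 0) (hv : 0 < v) :
    (1 + v ^ (-1 / β)) ^ (β - 1) = v ^ (1 / β - 1) * (1 + v ^ (1 / β)) ^ (β - 1) := by
  have hsplit : 1 + v ^ (-1 / β) = v ^ (-1 / β) * (1 + v ^ (1 / β)) := by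
    rw [mul_add, mul_one, ← rpow_add hv, neg_div, neg_add_cancel, rpow_zero, add_comm]
  have hexp : -1 / β * (β - 1) = 1 / β - 1 := by field_simp; ring
  rw [hsplit, mul_rpow (rpow_nonneg hv.le _) (by positivity), ← rpow_mul hv.le, hexp]

lemma hasDerivAt_one_add_rpow_inv_rpow {β v : ℝ} (hβ : β ≠ 0) (hv : 0 < v) :
    HasDerivAt (fun v : ℝ ↦ (1 + v ^ (1 / β)) ^ β) ((1 + v ^ (-1 / β)) ^ (β - 1)) v := by
  have hinner : HasDerivAt (fun v : ℝ ↦ 1 + v ^ (1 / β)) (1 / β * v ^ (1 / β - 1)) v :=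
    (hasDerivAt_rpow_const (Or.inl hv.ne')).const_add 1
  convert hinner.rpow_const (p := β) (Or.inl (by positivity)) using 1
  rw [one_add_rpow_neg_inv_rpow_sub_one hβ hv]
  field_simp

lemma hasDerivAt_vineRootFn {α β v : ℝ} (hβ : β ≠ 0) (hv : 0 < v) :
    HasDerivAt (vineRootFn α β) ((1 + v ^ (-1 / β)) ^ (β - 1) + 1 / α - 1) v := by
  have hlin : HasDerivAt (fun v : ℝ ↦ (1 - v) / α) (-(1 / α)) v :=
    (((hasDerivAt_id' v).const_sub 1).div_const α).congr_deriv (by ring)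
  exact (((hasDerivAt_one_add_rpow_inv_rpow hβ hv).sub hlin).sub (hasDerivAt_id' v)).congr_deriv
    (by ring)

lemma vineRootFn_deriv_pos {α β v : ℝ} (hα0 : 0 < α) (hα1 : α ≤ 1) (hβ : β ≠ 0) (hv : 0 < v) :
    0 < deriv (vineRootFn α β) v := by
  rw [(hasDerivAt_vineRootFn hβ hv).deriv]
  have : 1 ≤ 1 / α := by rwa [le_div_iff₀ hα0, one_mul]
  have : 0 < (1 + v ^ (-1 / β)) ^ (β - 1) := by positivity
  linarith

lemma continuous_vineRootFn {α β : ℝ} (hβ : 0 < β) : Continuous (vineRootFn α β) := by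
  have hpow : Continuous (fun v : ℝ ↦ v ^ (1 / β)) :=
    continuous_id.rpow_const fun _ ↦ Or.inr (by positivity)
  exact (((continuous_const.add hpow).rpow_const fun _ ↦ Or.inr hβ.le).sub
    ((continuous_const.sub continuous_id).div_const α)).sub continuous_id

lemma vineRootFn_zero {α β : ℝ} (hβ : β ≠ 0) : vineRootFn α β 0 = 1 - 1 / α := by
  simp [vineRootFn, zero_rpow (inv_ne_zero hβ)]

lemma vineRootFn_one (α β : ℝ) : vineRootFn α β 1 = 2 ^ β - 1 := by
  norm_num [vineRootFn]

lemma strictMonoOn_vineRootFn {α β : ℝ} (hα0 : 0 < α) (hα1 : α ≤ 1) (hβ : 0 < β) :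
    StrictMonoOn (vineRootFn α β) (Ici 0) := by
  refine strictMonoOn_of_deriv_pos (convex_Ici 0) (continuous_vineRootFn hβ).continuousOn ?_
  rw [interior_Ici]
  exact fun v hv ↦ vineRootFn_deriv_pos hα0 hα1 hβ.ne' hv

lemma existsUnique_mem_Ioo_eq_zero_of_strictMonoOn {f : ℝ → ℝ} {a b : ℝ} (hab : a ≤ b)
    (hf : ContinuousOn f (Icc a b)) (hmono : StrictMonoOn f (Icc a b)) (ha : f a < 0)
    (hb : 0 < f b) : ∃! v, v ∈ Ioo a b ∧ f v = 0 := by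
  obtain ⟨v, hv, hfv⟩ := intermediate_value_Ioo hab hf ⟨ha, hb⟩
  refine ⟨v, ⟨hv, hfv⟩, fun w ⟨hw, hfw⟩ ↦ ?_⟩
  exact hmono.injOn (Ioo_subset_Icc_self hw) (Ioo_subset_Icc_self hv) (hfw.trans hfv.symm)

lemma two_rpow_neg_lt_one_add_rpow_inv_rpow_neg {β v : ℝ} (hβ : 0 < β) (hv0 : 0 ≤ v)
    (hv1 : v < 1) : (2 : ℝ) ^ (-β) < (1 + v ^ (1 / β)) ^ (-β) := by
  have hlt : v ^ (1 / β) < 1 := rpow_lt_one hv0 hv1 (by positivity)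
  exact rpow_lt_rpow_of_neg (by positivity) (by linarith) (neg_neg_of_pos hβ)

theorem stmt12 (α β : ℝ) (hα : α ∈ Set.Ioo (0:ℝ) 1) (hβ : β ∈ Set.Ioo (0:ℝ) 1)
    (h : ℝ → ℝ)
    (hh : ∀ v : ℝ, h v = (1 + v ^ (1/β)) ^ β - (1 - v) / α - v) :
    (∀ v : ℝ, 0 < v →
      deriv h v = (1 + v ^ (-1/β)) ^ (β - 1) + 1/α - 1 ∧ 0 < deriv h v) ∧
    h 0 = 1 - 1/α ∧ h 0 < 0 ∧
    h 1 = (2:ℝ) ^ β - 1 ∧ 0 < h 1 ∧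
    (∃! v : ℝ, v ∈ Set.Ioo (0:ℝ) 1 ∧ h v = 0) ∧
    (∀ v ∈ Set.Ioo (0:ℝ) 1, h v = 0 →
      (2:ℝ) ^ (-β) < (1 + v ^ (1/β)) ^ (-β)) := by
  obtain ⟨hα0, hα1⟩ := hα
  obtain ⟨hβ0, -⟩ := hβ
  obtain rfl : h = vineRootFn α β := funext hh
  have hzero_neg : vineRootFn α β 0 < 0 := by
    rw [vineRootFn_zero hβ0.ne', sub_neg, lt_one_div one_pos hα0, div_one]
    exact hα1
  have hone_pos : 0 < vineRootFn α β 1 := by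
    rw [vineRootFn_one, sub_pos]
    exact one_lt_rpow one_lt_two hβ0
  refine ⟨fun v hv ↦ ⟨(hasDerivAt_vineRootFn hβ0.ne' hv).deriv,
      vineRootFn_deriv_pos hα0 hα1.le hβ0.ne' hv⟩,
    vineRootFn_zero hβ0.ne', hzero_neg, vineRootFn_one α β, hone_pos, ?_,
    fun v hv _ ↦ two_rpow_neg_lt_one_add_rpow_inv_rpow_neg hβ0 hv.1.le hv.2⟩
  exact existsUnique_mem_Ioo_eq_zero_of_strictMonoOn zero_le_one
    (continuous_vineRootFn hβ0).continuousOn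
    ((strictMonoOn_vineRootFn hα0 hα1.le hβ0).mono Icc_subset_Ici_self) hzero_neg hone_pos
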